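/- arXiv:2107.03314 — 3 statements merged into one kernel-verified Lean document; each statement's English description precedes it below -/
import Mathlib

section
/- Let δ > 0, 1 < p' < ∞, and m ∈ ℕ with m ≥ 1. Set X(t) = t^{p'}(log(e+t))^{(m+1)p'−1+δ} and B(t) = t^{p'}(log(e+t))^{p'−1+δ}, and Φ(t) = e^t − 1. Then for all sufficiently large t, X^{-1}(t) · (Φ^{-1}(t))^m ≤ C · B^{-1}(t) for some constant C depending on p', m, δ. -/
/-- Compatibility of the bump Young functions in Corollary 1.4:
`X^{-1}(t) (Φ^{-1}(t))^m ≲ B^{-1}(t)` for large `t`, where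
`X(t)=t^{p'}(log(e+t))^{(m+1)p'-1+δ}`, `B(t)=t^{p'}(log(e+t))^{p'-1+δ}`, `Φ(t)=e^t-1`. -/
theorem stmt7 (p' δ : ℝ) (hp : 1 < p') (hδ : 0 < δ) (m : ℕ) (hm : 1 ≤ m)
    (X B Xinv Binv : ℝ → ℝ)
    (hX : ∀ t : ℝ, 0 ≤ t →
      X t = t ^ p' * (Real.log (Real.exp 1 + t)) ^ (((m : ℝ) + 1) * p' - 1 + δ))
    (hB : ∀ t : ℝ, 0 ≤ t → B t = t ^ p' * (Real.log (Real.exp 1 + t)) ^ (p' - 1 + δ))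
    (hXinv : ∀ t : ℝ, 0 ≤ t → 0 ≤ Xinv t ∧ X (Xinv t) = t)
    (hBinv : ∀ t : ℝ, 0 ≤ t → 0 ≤ Binv t ∧ B (Binv t) = t) :
    ∃ C > (0 : ℝ), ∃ t₀ : ℝ, ∀ t : ℝ, t₀ ≤ t →
      Xinv t * (Real.log (1 + t)) ^ m ≤ C * Binv t := by
  have hp0 : (0:ℝ) < p' := by linarith
  have hm1 : (1:ℝ) ≤ (m:ℝ) := by exact_mod_cast hm
  set a : ℝ := ((m:ℝ)+1)*p' - 1 + δ with ha
  set b : ℝ := p' - 1 + δ with hbdef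
  have hb : 0 < b := by rw [hbdef]; linarith
  have ha0 : 0 < a := by
    have h1 : (1:ℝ)*1 ≤ ((m:ℝ)+1)*p' := by
      apply mul_le_mul (by linarith) hp.le zero_le_one (by linarith)
    rw [ha]; linarith
  set C1 : ℝ := 1 + p' + a with hC1def
  have hC1 : 0 < C1 := by rw [hC1def]; linarith
  set lam : ℝ := ((m:ℝ)+1) ^ (b/p') with hlam
  have hlampos : 0 < lam := Real.rpow_pos_of_pos (by linarith) _
  have hlam1 : 1 ≤ lam := Real.one_le_rpow (by linarith) (by positivity)
  have hlog1 : ∀ z : ℝ, 0 ≤ z → 1 ≤ Real.log (Real.exp 1 + z) := by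
    intro z hz
    calc (1:ℝ) = Real.log (Real.exp 1) := (Real.log_exp 1).symm
      _ ≤ Real.log (Real.exp 1 + z) := Real.log_le_log (Real.exp_pos 1) (by linarith)
  refine ⟨C1^m * lam, by positivity, 1, ?_⟩
  intro t ht
  have ht0 : (0:ℝ) ≤ t := by linarith
  obtain ⟨hx0, hXx⟩ := hXinv t ht0
  obtain ⟨hy0, hBy⟩ := hBinv t ht0
  set x := Xinv t with hxdef
  set y := Binv t with hydef
  rw [hX x hx0] at hXx
  rw [hB y hy0] at hBy
  set Lx := Real.log (Real.exp 1 + x) with hLx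
  have hLx1 : 1 ≤ Lx := hlog1 x hx0
  have hLx0 : 0 < Lx := by linarith
  have hxpos : 0 < x := by
    rcases hx0.lt_or_eq with h | h
    · exact h
    · exfalso
      rw [← h, Real.zero_rpow hp0.ne', zero_mul] at hXx
      linarith
  -- Step A : log(1+t) ≤ C1 * Lx
  have hlogx : Real.log x ≤ Lx := Real.log_le_log hxpos (by linarith [Real.exp_pos 1])
  have hlogLx : Real.log Lx ≤ Lx := by
    have := Real.log_le_sub_one_of_pos hLx0
    linarith
  have hA : Real.log (1 + t) ≤ C1 * Lx := by
    have h2t : Real.log (1+t) ≤ Real.log 2 + Real.log t := by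
      rw [← Real.log_mul (by norm_num) (by linarith)]
      exact Real.log_le_log (by linarith) (by linarith)
    have hlt : Real.log t = p' * Real.log x + a * Real.log Lx := by
      rw [← hXx, Real.log_mul (Real.rpow_pos_of_pos hxpos _).ne'
        (Real.rpow_pos_of_pos hLx0 _).ne', Real.log_rpow hxpos, Real.log_rpow hLx0]
    have hlog2 : Real.log 2 ≤ 1 := by
      have := Real.log_le_sub_one_of_pos (by norm_num : (0:ℝ) < 2)
      linarith
    have h1 : p' * Real.log x ≤ p' * Lx := mul_le_mul_of_nonneg_left hlogx hp0.le
    have h2 : a * Real.log Lx ≤ a * Lx := mul_le_mul_of_nonneg_left hlogLx ha0.le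
    rw [hC1def]
    calc Real.log (1+t) ≤ Real.log 2 + (p' * Real.log x + a * Real.log Lx) := by
          rw [← hlt]; exact h2t
      _ ≤ 1 * Lx + (p' * Lx + a * Lx) := by linarith
      _ = (1 + p' + a) * Lx := by ring
  -- Step B : log(e + u) ≤ (m+1) Lx where u = x * Lx^m
  set u := x * Lx^m with hu
  have hLxm1 : (1:ℝ) ≤ Lx^m := one_le_pow₀ hLx1
  have hupos : 0 < u := by positivity
  have hBlog : Real.log (Real.exp 1 + u) ≤ ((m:ℝ)+1) * Lx := by
    have h1 : Real.exp 1 + u ≤ (Real.exp 1 + x) * Lx^m := by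
      have h2 : Real.exp 1 * 1 ≤ Real.exp 1 * Lx^m :=
        mul_le_mul_of_nonneg_left hLxm1 (Real.exp_pos 1).le
      rw [hu]
      calc Real.exp 1 + x * Lx^m ≤ Real.exp 1 * Lx^m + x * Lx^m := by linarith
        _ = (Real.exp 1 + x) * Lx^m := by ring
    calc Real.log (Real.exp 1 + u)
        ≤ Real.log ((Real.exp 1 + x) * Lx^m) :=
          Real.log_le_log (by linarith [Real.exp_pos 1]) h1
      _ = Lx + (m:ℝ) * Real.log Lx := by
          rw [Real.log_mul (by positivity) (by positivity), Real.log_pow]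
      _ ≤ Lx + (m:ℝ) * Lx := by
          have := mul_le_mul_of_nonneg_left hlogLx (by positivity : (0:ℝ) ≤ (m:ℝ))
          linarith
      _ = ((m:ℝ)+1) * Lx := by ring
  -- Step C : B u ≤ (m+1)^b * t
  have hBu : B u ≤ ((m:ℝ)+1) ^ b * t := by
    rw [hB u hupos.le]
    have e1 : u ^ p' = x ^ p' * (Lx^m) ^ p' := Real.mul_rpow hxpos.le (by positivity)
    have e2 : (Real.log (Real.exp 1 + u)) ^ b ≤ (((m:ℝ)+1) * Lx) ^ b :=
      Real.rpow_le_rpow (by linarith [hlog1 u hupos.le]) hBlog hb.le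
    have e3 : (((m:ℝ)+1)*Lx) ^ b = ((m:ℝ)+1)^b * Lx^b := Real.mul_rpow (by linarith) hLx0.le
    have e4 : ((Lx^m : ℝ)) ^ p' * Lx ^ b = Lx ^ a := by
      rw [← Real.rpow_natCast Lx m, ← Real.rpow_mul hLx0.le, ← Real.rpow_add hLx0]
      congr 1
      rw [ha, hbdef]; ring
    calc u ^ p' * Real.log (Real.exp 1 + u) ^ b
        ≤ u ^ p' * (((m:ℝ)+1)^b * Lx^b) := by
          refine mul_le_mul_of_nonneg_left ?_ (Real.rpow_nonneg hupos.le p')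
          rw [← e3]; exact e2
      _ = ((m:ℝ)+1)^b * (x ^ p' * ((Lx^m) ^ p' * Lx^b)) := by rw [e1]; ring
      _ = ((m:ℝ)+1)^b * t := by rw [e4, hXx]
  -- Step D : (m+1)^b * t ≤ B (lam * y)
  have hly1 : 1 ≤ Real.log (Real.exp 1 + y) := hlog1 y hy0
  have hBly : ((m:ℝ)+1)^b * t ≤ B (lam * y) := by
    rw [hB (lam*y) (by positivity)]
    have e5 : (lam*y)^p' = lam^p' * y^p' := Real.mul_rpow hlampos.le hy0
    have e6 : lam ^ p' = ((m:ℝ)+1)^b := by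
      rw [hlam, ← Real.rpow_mul (by linarith), div_mul_cancel₀ _ hp0.ne']
    have hyle : y ≤ lam * y := le_mul_of_one_le_left hy0 hlam1
    have e7 : Real.log (Real.exp 1 + y) ^ b ≤ Real.log (Real.exp 1 + lam*y) ^ b :=
      Real.rpow_le_rpow (by linarith)
        (Real.log_le_log (by linarith [Real.exp_pos 1]) (by linarith)) hb.le
    calc ((m:ℝ)+1)^b * t
        = ((m:ℝ)+1)^b * (y ^ p' * Real.log (Real.exp 1 + y) ^ b) := by rw [hBy]
      _ ≤ ((m:ℝ)+1)^b * (y ^ p' * Real.log (Real.exp 1 + lam*y) ^ b) := by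
          refine mul_le_mul_of_nonneg_left
            (mul_le_mul_of_nonneg_left e7 (Real.rpow_nonneg hy0 _)) ?_
          positivity
      _ = (lam*y) ^ p' * Real.log (Real.exp 1 + lam*y) ^ b := by rw [e5, e6]; ring
  -- Step E : u ≤ lam * y
  have hE : u ≤ lam * y := by
    by_contra hcon
    push_neg at hcon
    have h1 : B (lam*y) < B u := by
      rw [hB u hupos.le, hB (lam*y) (by positivity)]
      have hly0 : (0:ℝ) ≤ lam*y := by positivity
      have f1 : (lam*y)^p' < u^p' := Real.rpow_lt_rpow hly0 hcon hp0
      have f2 : Real.log (Real.exp 1 + lam*y)^b ≤ Real.log (Real.exp 1 + u)^b :=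
        Real.rpow_le_rpow (by linarith [hlog1 (lam*y) hly0])
          (Real.log_le_log (by linarith [Real.exp_pos 1]) (by linarith)) hb.le
      have f3 : 0 < Real.log (Real.exp 1 + u)^b :=
        Real.rpow_pos_of_pos (by linarith [hlog1 u hupos.le]) b
      calc (lam*y)^p' * Real.log (Real.exp 1 + lam*y)^b
          ≤ (lam*y)^p' * Real.log (Real.exp 1 + u)^b :=
            mul_le_mul_of_nonneg_left f2 (Real.rpow_nonneg hly0 _)
        _ < u^p' * Real.log (Real.exp 1 + u)^b := mul_lt_mul_of_pos_right f1 f3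
    linarith
  -- Step F : conclude
  have hlog1t : 0 ≤ Real.log (1+t) := Real.log_nonneg (by linarith)
  have hF1 : Real.log (1+t) ^ m ≤ (C1*Lx)^m := pow_le_pow_left₀ hlog1t hA m
  calc x * Real.log (1+t)^m
      ≤ x * (C1*Lx)^m := mul_le_mul_of_nonneg_left hF1 hx0
    _ = C1^m * (x * Lx^m) := by rw [mul_pow]; ring
    _ ≤ C1^m * (lam * y) := mul_le_mul_of_nonneg_left hE (by positivity)
    _ = C1^m * lam * y := by ring
end

section
/- Let f ∈ L¹_loc(ℝ^n) be such that h(x) = log⁺(M(fχ_Q)(x)/f_Q) for a cube Q with f ≥ 0 and f_Q = (1/|Q|)∫_Q f > 0. Then the average h_Q = (1/|Q|)∫_Q h(x) dx is bounded by a constant depending only on n: h_Q ≤ C(n). -/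
/-!
By Vitali's covering lemma, applied to the countable family of cubes with rational corners and
sides, the maximal function satisfies the weak (1,1) bound `|{M g > s}| ≤ 4ⁿ ‖g‖₁ / s`. For
`g = f χ_Q` and `s = f_Q eᵗ` this gives `|{x ∈ Q : log⁺(M g x / f_Q) > t}| ≤ 4ⁿ |Q| e⁻ᵗ`, and the
layer-cake formula, with the trivial bound `|Q|` for `t ≤ log 4ⁿ`, yields
`∫_Q log⁺(M g / f_Q) ≤ |Q| (log 4ⁿ + 1)`.
-/

open MeasureTheory

def cube (n : ℕ) (a : Fin n → ℝ) (h : ℝ) : Set (Fin n → ℝ) :=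
  {x | ∀ i, a i ≤ x i ∧ x i ≤ a i + h}

/-- The Hardy–Littlewood maximal function over cubes. -/
noncomputable def maximalFn (n : ℕ) (f : (Fin n → ℝ) → ℝ) (x : Fin n → ℝ) : ℝ :=
  sSup {v : ℝ | ∃ a h, 0 < h ∧ x ∈ cube n a h ∧
    v = (volume (cube n a h)).toReal⁻¹ * ∫ y in cube n a h, |f y|}

open Metric Set

section Cube

variable {n : ℕ}

theorem cube_eq_Icc (a : Fin n → ℝ) (h : ℝ) : cube n a h = Icc a (fun i => a i + h) := by
  ext x
  simp [cube, Pi.le_def, forall_and]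

theorem measurableSet_cube (a : Fin n → ℝ) (h : ℝ) : MeasurableSet (cube n a h) := by
  rw [cube_eq_Icc]
  exact measurableSet_Icc

-- for the sup metric of `Fin n → ℝ`
theorem cube_eq_closedBall (a : Fin n → ℝ) {h : ℝ} (hh : 0 ≤ h) :
    cube n a h = closedBall (fun i => a i + h / 2) (h / 2) := by
  ext x
  rw [mem_closedBall, dist_pi_le_iff (by positivity)]
  refine forall_congr' fun i => ?_
  rw [Real.dist_eq, abs_le]
  constructor <;> rintro ⟨h₁, h₂⟩ <;> constructor <;> linarith

theorem volume_cube (a : Fin n → ℝ) {h : ℝ} (hh : 0 ≤ h) :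
    volume (cube n a h) = ENNReal.ofReal (h ^ n) := by
  rw [cube_eq_closedBall a hh, Real.volume_pi_closedBall _ (by positivity), Fintype.card_fin,
    mul_div_cancel₀ _ two_ne_zero]

theorem measureReal_cube (a : Fin n → ℝ) {h : ℝ} (hh : 0 ≤ h) :
    volume.real (cube n a h) = h ^ n := by
  rw [measureReal_def, volume_cube a hh, ENNReal.toReal_ofReal (by positivity)]

instance (a : Fin n → ℝ) (h : ℝ) : IsFiniteMeasure (volume.restrict (cube n a h)) :=
  isFiniteMeasure_restrict.2 (cube_eq_Icc a h ▸ isCompact_Icc.measure_ne_top)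

theorem lt_setAverage_cube_iff (g : (Fin n → ℝ) → ℝ) (a : Fin n → ℝ) {h : ℝ} (hh : 0 < h)
    (s : ℝ) : s < ⨍ y in cube n a h, g y ↔ s * h ^ n < ∫ y in cube n a h, g y := by
  rw [setAverage_eq, measureReal_cube a hh.le, smul_eq_mul, inv_mul_eq_div,
    lt_div_iff₀ (by positivity)]

end Cube

theorem tsum_ofReal_setIntegral_le_of_pairwiseDisjoint {α ι : Type*} [MeasurableSpace α]
    [Countable ι] {μ : Measure α} {g : α → ℝ} (hg : Integrable g μ) (hg0 : 0 ≤ g)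
    {Q : ι → Set α} (hQ : ∀ i, MeasurableSet (Q i)) (hd : Pairwise (Function.onFun Disjoint Q)) :
    ∑' i, ENNReal.ofReal (∫ x in Q i, g x ∂μ) ≤ ENNReal.ofReal (∫ x, g x ∂μ) := by
  have hg0' : 0 ≤ᵐ[μ] g := .of_forall hg0
  simp_rw [ofReal_integral_eq_lintegral_ofReal hg.integrableOn (ae_restrict_of_ae hg0'),
    ofReal_integral_eq_lintegral_ofReal hg hg0']
  rw [← lintegral_iUnion hQ hd]
  exact setLIntegral_le_lintegral _ _

section WeakType

variable {n : ℕ} {g : (Fin n → ℝ) → ℝ} {s : ℝ}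

-- Restricting to these makes the disjoint subfamily given by Vitali's lemma countable.
def ratCube (n : ℕ) (p : (Fin n → ℚ) × ℚ) : Set (Fin n → ℝ) :=
  cube n (fun i => (p.1 i : ℝ)) p.2

theorem exists_ratCube_mem_lt_setAverage (hg : Integrable g) (hg0 : 0 ≤ g) {a : Fin n → ℝ}
    {h : ℝ} (hh : 0 < h) {x : Fin n → ℝ} (hx : x ∈ cube n a h)
    (havg : s < ⨍ y in cube n a h, g y) :
    ∃ p : (Fin n → ℚ) × ℚ, 0 < (p.2 : ℝ) ∧ x ∈ ratCube n p ∧ s < ⨍ y in ratCube n p, g y := by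
  rw [lt_setAverage_cube_iff g a hh] at havg
  -- a slightly larger cube still has average above `s`
  obtain ⟨h', hh', hbound⟩ : ∃ h' > h, ∀ r ∈ Ioo h h', s * r ^ n < ∫ y in cube n a h, g y := by
    have : ∀ᶠ r in nhdsWithin h (Ioi h), s * r ^ n < ∫ y in cube n a h, g y :=
      nhdsWithin_le_nhds <|
        ((continuous_const.mul (continuous_pow n)).tendsto h).eventually_lt_const havg
    obtain ⟨h', hh', hsub⟩ := mem_nhdsGT_iff_exists_Ioo_subset.1 this
    exact ⟨h', hh', fun r hr => hsub hr⟩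
  set δ := (h' - h) / 3 with hδ
  obtain ⟨r, hr₁, hr₂⟩ := exists_rat_btwn (show h + δ < h + 2 * δ by linarith)
  choose q hq₁ hq₂ using fun i => exists_rat_btwn (show a i - δ < a i by linarith)
  have hsub : cube n a h ⊆ ratCube n (q, r) := fun y hy i =>
    ⟨by linarith [(hy i).1, hq₂ i], by linarith [(hy i).2, hq₁ i]⟩
  have hr : 0 < (r : ℝ) := by linarith
  refine ⟨(q, r), hr, hsub hx, (lt_setAverage_cube_iff g _ hr s).2 ?_⟩
  calc s * (r : ℝ) ^ n < ∫ y in cube n a h, g y := hbound r ⟨by linarith, by linarith⟩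
    _ ≤ ∫ y in ratCube n (q, r), g y :=
      setIntegral_mono_set hg.integrableOn (.of_forall hg0) hsub.eventuallyLE

theorem le_max_of_lt_setAverage_cube (hn : 0 < n) (hg : Integrable g) (hg0 : 0 ≤ g) (hs : 0 < s)
    {a : Fin n → ℝ} {h : ℝ} (hh : 0 < h) (havg : s < ⨍ y in cube n a h, g y) :
    h ≤ max 1 ((∫ y, g y) / s) := by
  rw [lt_setAverage_cube_iff g a hh] at havg
  rcases le_or_gt h 1 with h1 | h1
  · exact h1.trans (le_max_left _ _)
  · refine le_max_of_le_right ?_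
    rw [le_div_iff₀ hs]
    calc h * s ≤ h ^ n * s := by gcongr; exact le_self_pow₀ h1.le hn.ne'
      _ ≤ ∫ y, g y := by
        linarith [setIntegral_le_integral hg (.of_forall hg0) (s := cube n a h)]

theorem volume_closedBall_four_mul_le (hs : 0 < s) {a : Fin n → ℝ} {h : ℝ} (hh : 0 < h)
    (havg : s < ⨍ y in cube n a h, g y) :
    volume (closedBall (fun i => a i + h / 2) (4 * (h / 2))) ≤
      ENNReal.ofReal (4 ^ n / s * ∫ y in cube n a h, g y) := by
  rw [lt_setAverage_cube_iff g a hh] at havg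
  rw [Real.volume_pi_closedBall _ (by positivity), Fintype.card_fin]
  refine ENNReal.ofReal_le_ofReal ?_
  calc (2 * (4 * (h / 2))) ^ n = 4 ^ n * h ^ n := by ring
    _ ≤ 4 ^ n / s * ∫ y in cube n a h, g y := by
      rw [div_mul_eq_mul_div, le_div_iff₀ hs, mul_assoc]
      gcongr
      linarith

theorem volume_setOf_lt_setAverage_cube_le (hn : 0 < n) (hg : Integrable g) (hg0 : 0 ≤ g)
    (hs : 0 < s) :
    volume {x | ∃ a h, 0 < h ∧ x ∈ cube n a h ∧ s < ⨍ y in cube n a h, g y} ≤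
      ENNReal.ofReal (4 ^ n / s * ∫ y, g y) := by
  set t := {p : (Fin n → ℚ) × ℚ | 0 < (p.2 : ℝ) ∧ s < ⨍ y in ratCube n p, g y}
  let c : (Fin n → ℚ) × ℚ → Fin n → ℝ := fun p i => p.1 i + (p.2 : ℝ) / 2
  let r : (Fin n → ℚ) × ℚ → ℝ := fun p => (p.2 : ℝ) / 2
  have hball : ∀ p ∈ t, ratCube n p = closedBall (c p) (r p) :=
    fun p hp => cube_eq_closedBall _ hp.1.le
  have hr : ∀ p ∈ t, r p ≤ max 1 ((∫ y, g y) / s) := fun p hp =>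
    (half_le_self hp.1.le).trans (le_max_of_lt_setAverage_cube hn hg hg0 hs hp.1 hp.2)
  obtain ⟨u, hut, hdisj, hcover⟩ :=
    Vitali.exists_disjoint_subfamily_covering_enlargement_closedBall t c r _ hr 4 (by norm_num)
  have hsub : {x | ∃ a h, 0 < h ∧ x ∈ cube n a h ∧ s < ⨍ y in cube n a h, g y} ⊆
      ⋃ p ∈ u, closedBall (c p) (4 * r p) := by
    rintro x ⟨a, h, hh, hx, havg⟩
    obtain ⟨p, hp, hxp, havgp⟩ := exists_ratCube_mem_lt_setAverage hg hg0 hh hx havg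
    obtain ⟨b, hbu, hb⟩ := hcover p ⟨hp, havgp⟩
    exact mem_biUnion hbu (hb (hball p ⟨hp, havgp⟩ ▸ hxp))
  have hudisj : Pairwise (Function.onFun Disjoint fun p : u => ratCube n p) := fun p q hpq => by
    rw [Function.onFun, hball p (hut p.2), hball q (hut q.2)]
    exact hdisj p.2 q.2 (Subtype.coe_injective.ne hpq)
  calc volume {x | ∃ a h, 0 < h ∧ x ∈ cube n a h ∧ s < ⨍ y in cube n a h, g y}
      ≤ ∑' p : u, volume (closedBall (c p) (4 * r p)) :=
        (measure_mono hsub).trans (measure_biUnion_le _ u.to_countable _)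
    _ ≤ ∑' p : u, ENNReal.ofReal (4 ^ n / s) * ENNReal.ofReal (∫ y in ratCube n p, g y) :=
        ENNReal.tsum_le_tsum fun p => (volume_closedBall_four_mul_le hs (hut p.2).1
          (hut p.2).2).trans_eq (ENNReal.ofReal_mul (by positivity))
    _ = ENNReal.ofReal (4 ^ n / s) * ∑' p : u, ENNReal.ofReal (∫ y in ratCube n p, g y) :=
        ENNReal.tsum_mul_left
    _ ≤ ENNReal.ofReal (4 ^ n / s) * ENNReal.ofReal (∫ y, g y) := by
        gcongr
        exact tsum_ofReal_setIntegral_le_of_pairwiseDisjoint hg hg0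
          (fun p => measurableSet_cube _ _) hudisj
    _ = ENNReal.ofReal (4 ^ n / s * ∫ y, g y) := (ENNReal.ofReal_mul (by positivity)).symm

end WeakType

section Maximal

variable {n : ℕ}

theorem maximalFn_nonneg (g : (Fin n → ℝ) → ℝ) (x : Fin n → ℝ) : 0 ≤ maximalFn n g x :=
  Real.sSup_nonneg fun _ ⟨_, _, _, _, hv⟩ =>
    hv ▸ mul_nonneg (by positivity) (integral_nonneg fun _ => abs_nonneg _)

theorem setOf_lt_maximalFn_subset (g : (Fin n → ℝ) → ℝ) {s : ℝ} (hs : 0 ≤ s) :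
    {x | s < maximalFn n g x} ⊆
      {x | ∃ a h, 0 < h ∧ x ∈ cube n a h ∧ s < ⨍ y in cube n a h, |g y|} := by
  intro x (hx : s < maximalFn n g x)
  rcases (({v : ℝ | ∃ a h, 0 < h ∧ x ∈ cube n a h ∧
    v = (volume (cube n a h)).toReal⁻¹ * ∫ y in cube n a h, |g y|}).eq_empty_or_nonempty)
    with hempty | hne
  · rw [maximalFn, hempty, Real.sSup_empty] at hx
    exact absurd hs hx.not_ge
  obtain ⟨v, ⟨a, h, hh, hxc, rfl⟩, hv⟩ := exists_lt_of_lt_csSup hne hx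
  exact ⟨a, h, hh, hxc, by rwa [setAverage_eq, smul_eq_mul, measureReal_def]⟩

theorem volume_setOf_lt_maximalFn_le (hn : 0 < n) {g : (Fin n → ℝ) → ℝ} (hg : Integrable g)
    {s : ℝ} (hs : 0 < s) :
    volume {x | s < maximalFn n g x} ≤ ENNReal.ofReal (4 ^ n / s * ∫ y, |g y|) :=
  (measure_mono (setOf_lt_maximalFn_subset g hs.le)).trans
    (volume_setOf_lt_setAverage_cube_le hn hg.abs (fun _ => abs_nonneg _) hs)

end Maximal

section LayerCake

variable {α : Type*} [MeasurableSpace α] {μ : Measure α} [IsFiniteMeasure μ] {F : α → ℝ} {K : ℝ}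

theorem lintegral_ofReal_le_of_measure_lt_le (hF0 : 0 ≤ F) (hFm : AEMeasurable F μ) (hK : 1 ≤ K)
    (hdist : ∀ t > 0, μ {x | t < F x} ≤ ENNReal.ofReal (K * μ.real univ * Real.exp (-t))) :
    ∫⁻ x, ENNReal.ofReal (F x) ∂μ ≤ ENNReal.ofReal (μ.real univ * (Real.log K + 1)) := by
  set V := μ.real univ
  set T := Real.log K
  have hT : 0 ≤ T := Real.log_nonneg hK
  rw [lintegral_eq_lintegral_meas_lt μ (.of_forall hF0) hFm, ← Ioc_union_Ioi_eq_Ioi hT,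
    lintegral_union measurableSet_Ioi (Ioc_disjoint_Ioi le_rfl)]
  have hsmall : ∫⁻ t in Ioc 0 T, μ {x | t < F x} ≤ ENNReal.ofReal (V * T) :=
    calc ∫⁻ t in Ioc 0 T, μ {x | t < F x} ≤ ∫⁻ _ in Ioc 0 T, μ univ :=
          lintegral_mono fun _ => measure_mono (subset_univ _)
      _ = ENNReal.ofReal (V * T) := by
        rw [setLIntegral_const, Real.volume_Ioc, sub_zero, ENNReal.ofReal_mul measureReal_nonneg,
          ofReal_measureReal]
  have hlarge : ∫⁻ t in Ioi T, μ {x | t < F x} ≤ ENNReal.ofReal V :=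
    calc ∫⁻ t in Ioi T, μ {x | t < F x}
        ≤ ∫⁻ t in Ioi T, ENNReal.ofReal (K * V * Real.exp (-t)) :=
          setLIntegral_mono' measurableSet_Ioi fun t ht => hdist t (hT.trans_lt ht)
      _ = ENNReal.ofReal (∫ t in Ioi T, K * V * Real.exp (-t)) := by
        refine (ofReal_integral_eq_lintegral_ofReal ?_ (.of_forall fun t => by positivity)).symm
        simpa using (exp_neg_integrableOn_Ioi T one_pos).const_mul (K * V)
      _ = ENNReal.ofReal V := by
        rw [integral_const_mul, integral_exp_neg_Ioi, Real.exp_neg, Real.exp_log (by linarith)]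
        field_simp
  calc _ ≤ ENNReal.ofReal (V * T) + ENNReal.ofReal V := add_le_add hsmall hlarge
    _ = _ := by rw [← ENNReal.ofReal_add (by positivity) measureReal_nonneg, mul_add_one]

theorem average_le_of_measure_lt_le (hF0 : 0 ≤ F) (hK : 1 ≤ K)
    (hdist : ∀ t > 0, μ {x | t < F x} ≤ ENNReal.ofReal (K * μ.real univ * Real.exp (-t))) :
    ⨍ x, F x ∂μ ≤ Real.log K + 1 := by
  have hC : 0 ≤ Real.log K + 1 := by linarith [Real.log_nonneg hK]
  by_cases hF : Integrable F μ
  swap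
  · rw [average_eq, integral_undef hF, smul_zero]
    exact hC
  rcases eq_zero_or_neZero μ with rfl | hμ
  · rw [average_zero_measure]
    exact hC
  rw [average_eq, smul_eq_mul, inv_mul_le_iff₀ measureReal_univ_pos,
    integral_eq_lintegral_of_nonneg_ae (.of_forall hF0) hF.1]
  exact ENNReal.toReal_le_of_le_ofReal (by positivity)
    (lintegral_ofReal_le_of_measure_lt_le hF0 hF.1.aemeasurable hK hdist)

end LayerCake

theorem mul_exp_lt_of_lt_max_log_div {m l t : ℝ} (hm : 0 ≤ m) (hl : 0 < l) (ht : 0 < t)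
    (h : t < max (Real.log (m / l)) 0) : l * Real.exp t < m := by
  have hlog : t < Real.log (m / l) := (lt_max_iff.1 h).resolve_right ht.not_gt
  have hml : 0 < m / l := (div_nonneg hm hl.le).lt_of_ne fun h0 => by
    rw [← h0, Real.log_zero] at hlog
    linarith
  rw [← lt_div_iff₀' hl]
  exact (Real.lt_log_iff_exp_lt hml).1 hlog

theorem volume_lt_max_log_maximalFn_indicator_le {n : ℕ} (hn : 0 < n) {S : Set (Fin n → ℝ)}
    (hS : MeasurableSet S) {f : (Fin n → ℝ) → ℝ} (hf : IntegrableOn f S) (hf0 : 0 ≤ f)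
    (havg : 0 < ⨍ x in S, f x) {t : ℝ} (ht : 0 < t) :
    volume {x | t < max (Real.log (maximalFn n (S.indicator f) x / ⨍ y in S, f y)) 0} ≤
      ENNReal.ofReal (4 ^ n * volume.real S * Real.exp (-t)) := by
  set m := ⨍ y in S, f y
  have hS_fin : volume S ≠ ⊤ := fun h => by
    simp [m, setAverage_eq, measureReal_def, h] at havg
  have hint : ∫ y, |S.indicator f y| = volume.real S * m := by
    rw [← smul_eq_mul, measure_smul_setAverage f hS_fin, ← integral_indicator hS]
    simp_rw [abs_of_nonneg (indicator_nonneg (fun y _ => hf0 y) _)]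
  calc volume {x | t < max (Real.log (maximalFn n (S.indicator f) x / m)) 0}
      ≤ volume {x | m * Real.exp t < maximalFn n (S.indicator f) x} :=
        measure_mono fun x hx => mul_exp_lt_of_lt_max_log_div (maximalFn_nonneg _ _) havg ht hx
    _ ≤ ENNReal.ofReal (4 ^ n / (m * Real.exp t) * ∫ y, |S.indicator f y|) :=
        volume_setOf_lt_maximalFn_le hn ((integrable_indicator_iff hS).2 hf) (by positivity)
    _ = ENNReal.ofReal (4 ^ n * volume.real S * Real.exp (-t)) := by
        rw [hint, Real.exp_neg]
        congr 1
        field_simp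

/-- The average over `Q` of `log⁺(M(fχ_Q)/f_Q)` is bounded by a dimensional constant. -/
theorem stmt13 (n : ℕ) (hn : 0 < n) :
    ∃ C > (0 : ℝ), ∀ (a : Fin n → ℝ) (h : ℝ), 0 < h →
      ∀ f : (Fin n → ℝ) → ℝ, (∀ x, 0 ≤ f x) →
      MeasureTheory.IntegrableOn f (cube n a h) →
      0 < (volume (cube n a h)).toReal⁻¹ * ∫ x in cube n a h, f x →
      (volume (cube n a h)).toReal⁻¹ * ∫ x in cube n a h,
        max (Real.log (maximalFn n ((cube n a h).indicator f) x /
          ((volume (cube n a h)).toReal⁻¹ * ∫ y in cube n a h, f y))) 0 ≤ C := by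
  have hK : (1 : ℝ) ≤ 4 ^ n := one_le_pow₀ (by norm_num)
  have hsetAverage (S : Set (Fin n → ℝ)) (g : (Fin n → ℝ) → ℝ) :
      (volume S).toReal⁻¹ * ∫ x in S, g x = ⨍ x in S, g x := by
    rw [setAverage_eq, smul_eq_mul, measureReal_def]
  refine ⟨Real.log (4 ^ n) + 1, by linarith [Real.log_nonneg hK], fun a h _ f hf0 hf havg => ?_⟩
  simp only [hsetAverage] at havg ⊢
  refine average_le_of_measure_lt_le (fun x => le_max_right _ _) hK fun t ht => ?_
  rw [measureReal_restrict_apply_univ]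
  exact (Measure.restrict_apply_le _ _).trans
    (volume_lt_max_log_maximalFn_indicator_le hn (measurableSet_cube a h) hf hf0 havg ht)
end

section
/- Let α > 0 and let Q be a cube. For a nonnegative measurable f with f_Q = (1/|Q|)∫_Q f > 0, the Luxemburg norm for the Young function L(log L)^α satisfies ‖f‖_{L(log L)^α, Q} ≍ (1/|Q|) ∫_Q f(x) (log(e + f(x)/f_Q))^α dx, with implicit constants depending only on α. -/
open MeasureTheory

/-- Normalized average `(1/|Q|) ∫_Q f`. -/
noncomputable def avgI (n : ℕ) (Q : Set (Fin n → ℝ)) (f : (Fin n → ℝ) → ℝ) : ℝ :=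
  (volume Q).toReal⁻¹ * ∫ x in Q, f x

/-- The normalized Orlicz (Luxemburg) average `‖f‖_{A,Q}`. -/
noncomputable def orliczAvg (n : ℕ) (A : ℝ → ℝ) (Q : Set (Fin n → ℝ))
    (f : (Fin n → ℝ) → ℝ) : ℝ :=
  sInf {l : ℝ | 0 < l ∧ (volume Q).toReal⁻¹ * ∫ x in Q, A (|f x| / l) ≤ 1}

open Real

lemma one_le_elog {t : ℝ} (ht : 0 ≤ t) : 1 ≤ Real.log (Real.exp 1 + t) := by
  calc 1 = Real.log (Real.exp 1) := (Real.log_exp 1).symm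
  _ ≤ _ := Real.log_le_log (Real.exp_pos 1) (by linarith)

lemma elog_pos {t : ℝ} (ht : 0 ≤ t) : 0 < Real.exp 1 + t := by
  have := Real.exp_pos 1; linarith

lemma log_split {a b : ℝ} (ha : 0 ≤ a) (hb : 0 ≤ b) :
    Real.log (Real.exp 1 + a * b) ≤ Real.log (Real.exp 1 + a) + Real.log (Real.exp 1 + b) := by
  have he : (1:ℝ) ≤ Real.exp 1 := Real.one_le_exp (by norm_num)
  have h1 : Real.exp 1 + a * b ≤ (Real.exp 1 + a) * (Real.exp 1 + b) := by nlinarith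
  calc Real.log (Real.exp 1 + a * b) ≤ Real.log ((Real.exp 1 + a) * (Real.exp 1 + b)) :=
        Real.log_le_log (by nlinarith) h1
  _ = _ := Real.log_mul (by positivity) (by positivity)

lemma rpow_add_le {x y α : ℝ} (hx : 0 ≤ x) (hy : 0 ≤ y) (hα : 0 ≤ α) :
    (x + y) ^ α ≤ 2 ^ α * (x ^ α + y ^ α) := by
  have h2 : (0:ℝ) < 2 ^ α := Real.rpow_pos_of_pos (by norm_num) α
  rcases le_total x y with hxy | hxy
  · have h1 : (x+y)^α ≤ (2*y)^α := Real.rpow_le_rpow (by linarith) (by linarith) hα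
    have h2' : ((2:ℝ)*y)^α = 2^α * y^α := Real.mul_rpow (by norm_num) hy
    have h3 : 0 ≤ x ^ α := Real.rpow_nonneg hx α
    nlinarith
  · have h1 : (x+y)^α ≤ (2*x)^α := Real.rpow_le_rpow (by linarith) (by linarith) hα
    have h2' : ((2:ℝ)*x)^α = 2^α * x^α := Real.mul_rpow (by norm_num) hx
    have h3 : 0 ≤ y ^ α := Real.rpow_nonneg hy α
    nlinarith

lemma exp_neg_pow_le (m : ℕ) {s : ℝ} (hs : 0 ≤ s) : Real.exp (-s) * s ^ m ≤ m.factorial := by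
  have h1 : s ^ m / m.factorial ≤ Real.exp s := by
    calc s ^ m / m.factorial ≤ ∑ i ∈ Finset.range (m+1), s ^ i / i.factorial := by
          exact Finset.single_le_sum (f := fun i => s ^ i / (i.factorial : ℝ))
            (fun i _ => by positivity) (Finset.self_mem_range_succ m)
    _ ≤ Real.exp s := Real.sum_le_exp_of_nonneg hs (m+1)
  have h2 : (0:ℝ) < m.factorial := by positivity
  have h3 : s ^ m ≤ m.factorial * Real.exp s := by
    rw [div_le_iff₀ h2] at h1; linarith
  have h4 : Real.exp (-s) * s ^ m ≤ Real.exp (-s) * (m.factorial * Real.exp s) := by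
    apply mul_le_mul_of_nonneg_left h3 (Real.exp_pos _).le
  calc Real.exp (-s) * s ^ m ≤ Real.exp (-s) * (m.factorial * Real.exp s) := h4
  _ = m.factorial * (Real.exp (-s) * Real.exp s) := by ring
  _ = m.factorial := by rw [← Real.exp_add]; simp

/-- `t (log(e + 1/t))^α ≤ M(α)` for `0 < t ≤ 1`. -/
lemma t_log_bound (α : ℝ) (hα : 0 ≤ α) {t : ℝ} (ht : 0 < t) (ht1 : t ≤ 1) :
    t * (Real.log (Real.exp 1 + 1/t)) ^ α ≤ 2^α * (2^α + (1 + (Nat.ceil α).factorial)) := by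
  set m := Nat.ceil α with hm
  have h2 : (0:ℝ) < 2 ^ α := Real.rpow_pos_of_pos (by norm_num) α
  have he : (2:ℝ) ≤ Real.exp 1 := by
    have := Real.add_one_le_exp (1:ℝ); linarith
  -- log(e + 1/t) ≤ log(e+1) + log(1/t)
  have hinv : (1:ℝ) ≤ 1/t := by rw [le_div_iff₀ ht]; linarith
  have hstep1 : Real.exp 1 + 1/t ≤ (Real.exp 1 + 1) * (1/t) := by
    have h1t : (1/t) * t = 1 := by field_simp
    rw [mul_one_div, le_div_iff₀ ht]; nlinarith
  have hlog1 : Real.log (Real.exp 1 + 1/t) ≤ Real.log (Real.exp 1 + 1) + Real.log (1/t) := by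
    calc Real.log (Real.exp 1 + 1/t) ≤ Real.log ((Real.exp 1 + 1) * (1/t)) :=
          Real.log_le_log (elog_pos (by positivity)) hstep1
    _ = _ := Real.log_mul (by positivity) (by positivity)
  have hle2 : Real.log (Real.exp 1 + 1) ≤ 2 := by
    rw [← Real.log_exp 2]
    apply Real.log_le_log (elog_pos (by norm_num))
    have : Real.exp 2 = Real.exp 1 * Real.exp 1 := by rw [← Real.exp_add]; norm_num
    nlinarith
  set s := Real.log (1/t) with hs
  have hs0 : 0 ≤ s := Real.log_nonneg hinv
  have hts : t = Real.exp (-s) := by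
    rw [hs, Real.log_div (by norm_num) (ne_of_gt ht), Real.log_one, zero_sub, neg_neg,
      Real.exp_log ht]
  -- s^α ≤ 1 + s^m
  have hsm : s ^ α ≤ 1 + s ^ m := by
    rcases le_total s 1 with h1 | h1
    · have : s ^ α ≤ 1 := Real.rpow_le_one hs0 h1 hα
      have : (0:ℝ) ≤ s ^ m := by positivity
      linarith [Real.rpow_le_one hs0 h1 hα]
    · have : s ^ α ≤ s ^ (m:ℝ) := Real.rpow_le_rpow_of_exponent_le h1 (Nat.le_ceil α)
      rw [Real.rpow_natCast] at this
      linarith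
  -- t * s^α ≤ 1 + m!
  have hts2 : t * s ^ α ≤ 1 + (m.factorial : ℝ) := by
    have h4 : t * s ^ α ≤ t * (1 + s ^ m) :=
      mul_le_mul_of_nonneg_left hsm ht.le
    have h5 : t * s ^ m ≤ m.factorial := by rw [hts]; exact exp_neg_pow_le m hs0
    nlinarith
  -- put together
  have hlogα : (Real.log (Real.exp 1 + 1/t)) ^ α ≤ 2^α * ((2:ℝ)^α + s ^ α) := by
    have hL0 : 0 ≤ Real.log (Real.exp 1 + 1/t) :=
      le_trans zero_le_one (one_le_elog (by positivity))
    calc (Real.log (Real.exp 1 + 1/t)) ^ α ≤ (Real.log (Real.exp 1 + 1) + s) ^ α :=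
          Real.rpow_le_rpow hL0 hlog1 hα
    _ ≤ 2^α * ((Real.log (Real.exp 1 + 1))^α + s ^ α) :=
          rpow_add_le (Real.log_nonneg (by nlinarith)) hs0 hα
    _ ≤ 2^α * ((2:ℝ)^α + s ^ α) := by
          have : (Real.log (Real.exp 1 + 1))^α ≤ (2:ℝ)^α :=
            Real.rpow_le_rpow (Real.log_nonneg (by nlinarith)) hle2 hα
          nlinarith
  have hsα : 0 ≤ s ^ α := Real.rpow_nonneg hs0 α
  calc t * (Real.log (Real.exp 1 + 1/t)) ^ α ≤ t * (2^α * ((2:ℝ)^α + s ^ α)) := by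
        apply mul_le_mul_of_nonneg_left hlogα ht.le
  _ = 2^α * (t * (2:ℝ)^α + t * s ^ α) := by ring
  _ ≤ 2^α * (2^α + (1 + (m.factorial:ℝ))) := by
        have : t * (2:ℝ)^α ≤ 2^α := by nlinarith
        nlinarith

lemma wilson_aux {X : Type*} [MeasurableSpace X] {μ : Measure X} {α V F B : ℝ}
    (hα : 0 < α) (hV : 0 < V) {f : X → ℝ} (hf0 : ∀ x, 0 ≤ f x) (hfm : Measurable f)
    (hfi : Integrable f μ) (hFdef : F = V⁻¹ * ∫ x, f x ∂μ) (hF : 0 < F)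
    (hgi : Integrable (fun x => f x * Real.log (Real.exp 1 + f x / F) ^ α) μ)
    (hBdef : B = V⁻¹ * ∫ x, f x * Real.log (Real.exp 1 + f x / F) ^ α ∂μ) :
    ((2:ℝ)^α * (1 + 2^α * (2^α + (1 + (Nat.ceil α).factorial))))⁻¹ * B ≤
      sInf {l : ℝ | 0 < l ∧
        V⁻¹ * ∫ x, (|f x| / l) * Real.log (Real.exp 1 + |f x| / l) ^ α ∂μ ≤ 1} ∧
    sInf {l : ℝ | 0 < l ∧
        V⁻¹ * ∫ x, (|f x| / l) * Real.log (Real.exp 1 + |f x| / l) ^ α ∂μ ≤ 1} ≤ B := by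
  have hα0 : (0:ℝ) ≤ α := hα.le
  have h2α : (0:ℝ) < 2^α := Real.rpow_pos_of_pos (by norm_num) α
  set M : ℝ := 2^α * (2^α + (1 + (Nat.ceil α).factorial)) with hMdef
  have hMpos : 0 < M := by positivity
  set K : ℝ := 2^α * (1 + M) with hKdef
  have hKpos : 0 < K := by positivity
  have hlogF : ∀ x, 1 ≤ Real.log (Real.exp 1 + f x / F) := fun x =>
    one_le_elog (div_nonneg (hf0 x) hF.le)
  set g : X → ℝ := fun x => f x * Real.log (Real.exp 1 + f x / F) ^ α with hgdef
  have hg0 : ∀ x, 0 ≤ g x := fun x => mul_nonneg (hf0 x)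
    (Real.rpow_nonneg (by linarith [hlogF x]) α)
  have hfg : ∀ x, f x ≤ g x := fun x =>
    le_mul_of_one_le_right (hf0 x) (Real.one_le_rpow (hlogF x) hα0)
  have hFB : F ≤ B := by
    rw [hFdef, hBdef]
    exact mul_le_mul_of_nonneg_left (integral_mono hfi hgi hfg) (inv_nonneg.2 hV.le)
  have hB : 0 < B := lt_of_lt_of_le hF hFB
  have hIg : ∫ x, g x ∂μ = V * B := by
    rw [hBdef, ← mul_assoc, mul_inv_cancel₀ hV.ne', one_mul]
  have hIf : ∫ x, f x ∂μ = V * F := by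
    rw [hFdef, ← mul_assoc, mul_inv_cancel₀ hV.ne', one_mul]
  have hmg : ∀ c : ℝ, Measurable fun x => f x * Real.log (Real.exp 1 + f x / c) ^ α :=
    fun c => hfm.mul ((Real.continuous_rpow_const hα0).measurable.comp
      ((measurable_const.add (hfm.div_const c)).log))
  -- pointwise splitting lemma
  have hsplit : ∀ (p q : ℝ), 0 < p → 0 < q → ∀ x,
      f x * Real.log (Real.exp 1 + f x / q) ^ α ≤
        2^α * (f x * Real.log (Real.exp 1 + f x / p) ^ α) +
        (2^α * Real.log (Real.exp 1 + p / q) ^ α) * f x := by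
    intro p q hp hq x
    have hdiv : f x / q = (f x / p) * (p / q) := by
      field_simp
    have h1 : Real.log (Real.exp 1 + f x / q) ≤
        Real.log (Real.exp 1 + f x / p) + Real.log (Real.exp 1 + p / q) := by
      rw [hdiv]; exact log_split (div_nonneg (hf0 x) hp.le) (div_nonneg hp.le hq.le)
    have hA : 0 ≤ Real.log (Real.exp 1 + f x / p) := by
      linarith [one_le_elog (div_nonneg (hf0 x) hp.le)]
    have hBq : 0 ≤ Real.log (Real.exp 1 + p / q) := by
      linarith [one_le_elog (div_nonneg hp.le hq.le)]
    have h0q : 0 ≤ Real.log (Real.exp 1 + f x / q) := by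
      linarith [one_le_elog (div_nonneg (hf0 x) hq.le)]
    have h2 : Real.log (Real.exp 1 + f x / q) ^ α ≤
        2^α * (Real.log (Real.exp 1 + f x / p) ^ α + Real.log (Real.exp 1 + p / q) ^ α) := by
      calc Real.log (Real.exp 1 + f x / q) ^ α
          ≤ (Real.log (Real.exp 1 + f x / p) + Real.log (Real.exp 1 + p / q)) ^ α :=
            Real.rpow_le_rpow h0q h1 hα0
      _ ≤ _ := rpow_add_le hA hBq hα0
    have h3 := mul_le_mul_of_nonneg_left h2 (hf0 x)
    refine h3.trans_eq ?_
    ring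
  -- integrability of f * log(e + f/l)^α for any l > 0
  have hφi : ∀ l : ℝ, 0 < l →
      Integrable (fun x => f x * Real.log (Real.exp 1 + f x / l) ^ α) μ := by
    intro l hl
    apply Integrable.mono'
      (g := fun x => 2^α * g x + (2^α * Real.log (Real.exp 1 + F / l) ^ α) * f x)
      ((hgi.const_mul _).add (hfi.const_mul _)) (hmg l).aestronglyMeasurable
    filter_upwards with x
    rw [Real.norm_of_nonneg (mul_nonneg (hf0 x) (Real.rpow_nonneg
      (by linarith [one_le_elog (div_nonneg (hf0 x) hl.le)]) α))]
    exact hsplit F l hF hl x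
  -- B belongs to the defining set
  have hBS : B ∈ {l : ℝ | 0 < l ∧
      V⁻¹ * ∫ x, (|f x| / l) * Real.log (Real.exp 1 + |f x| / l) ^ α ∂μ ≤ 1} := by
    refine ⟨hB, ?_⟩
    have hpt : ∀ x, (|f x| / B) * Real.log (Real.exp 1 + |f x| / B) ^ α ≤ B⁻¹ * g x := by
      intro x
      rw [abs_of_nonneg (hf0 x)]
      have h1 : f x / B ≤ f x / F := div_le_div_of_nonneg_left (hf0 x) hF hFB
      have h2 : Real.log (Real.exp 1 + f x / B) ≤ Real.log (Real.exp 1 + f x / F) :=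
        Real.log_le_log (elog_pos (div_nonneg (hf0 x) hB.le)) (by linarith)
      have h3 : Real.log (Real.exp 1 + f x / B) ^ α ≤ Real.log (Real.exp 1 + f x / F) ^ α :=
        Real.rpow_le_rpow (by linarith [one_le_elog (div_nonneg (hf0 x) hB.le)]) h2 hα0
      have h4 : (f x / B) * Real.log (Real.exp 1 + f x / B) ^ α ≤
          (f x / B) * Real.log (Real.exp 1 + f x / F) ^ α :=
        mul_le_mul_of_nonneg_left h3 (div_nonneg (hf0 x) hB.le)
      refine h4.trans_eq ?_
      simp only [hgdef]
      ring
    have hiA : Integrable (fun x => (|f x| / B) * Real.log (Real.exp 1 + |f x| / B) ^ α) μ := by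
      have heq : (fun x => (|f x| / B) * Real.log (Real.exp 1 + |f x| / B) ^ α) =
          fun x => B⁻¹ * (f x * Real.log (Real.exp 1 + f x / B) ^ α) := by
        funext x; rw [abs_of_nonneg (hf0 x)]; ring
      rw [heq]
      exact (hφi B hB).const_mul _
    have hint : ∫ x, (|f x| / B) * Real.log (Real.exp 1 + |f x| / B) ^ α ∂μ ≤ B⁻¹ * (V * B) := by
      calc ∫ x, (|f x| / B) * Real.log (Real.exp 1 + |f x| / B) ^ α ∂μ
          ≤ ∫ x, B⁻¹ * g x ∂μ := integral_mono hiA (hgi.const_mul _) hpt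
      _ = B⁻¹ * ∫ x, g x ∂μ := integral_const_mul _ _
      _ = B⁻¹ * (V * B) := by rw [hIg]
    calc V⁻¹ * ∫ x, (|f x| / B) * Real.log (Real.exp 1 + |f x| / B) ^ α ∂μ
        ≤ V⁻¹ * (B⁻¹ * (V * B)) := mul_le_mul_of_nonneg_left hint (inv_nonneg.2 hV.le)
    _ = 1 := by field_simp
  have hbdd : BddBelow {l : ℝ | 0 < l ∧
      V⁻¹ * ∫ x, (|f x| / l) * Real.log (Real.exp 1 + |f x| / l) ^ α ∂μ ≤ 1} :=
    ⟨0, fun l hl => hl.1.le⟩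
  refine ⟨?_, csInf_le hbdd hBS⟩
  -- lower bound
  have hlower : ∀ l ∈ {l : ℝ | 0 < l ∧
      V⁻¹ * ∫ x, (|f x| / l) * Real.log (Real.exp 1 + |f x| / l) ^ α ∂μ ≤ 1}, B ≤ K * l := by
    intro l hl
    obtain ⟨hl0, hl1⟩ := hl
    set φ : X → ℝ := fun x => f x * Real.log (Real.exp 1 + f x / l) ^ α with hφdef
    have hφint : Integrable φ μ := hφi l hl0
    have heq : (fun x => (|f x| / l) * Real.log (Real.exp 1 + |f x| / l) ^ α) =
        fun x => l⁻¹ * φ x := by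
      funext x
      simp only [hφdef]
      rw [abs_of_nonneg (hf0 x)]
      ring
    rw [heq] at hl1
    rw [integral_const_mul] at hl1
    have hIφ : ∫ x, φ x ∂μ ≤ V * l := by
      have h3 : ∫ x, φ x ∂μ = (V * l) * (V⁻¹ * (l⁻¹ * ∫ x, φ x ∂μ)) := by
        field_simp
      rw [h3]
      calc (V * l) * (V⁻¹ * (l⁻¹ * ∫ x, φ x ∂μ)) ≤ (V * l) * 1 :=
            mul_le_mul_of_nonneg_left hl1 (by positivity)
      _ = V * l := mul_one _
    have hfφ : ∀ x, f x ≤ φ x := fun x => le_mul_of_one_le_right (hf0 x)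
      (Real.one_le_rpow (one_le_elog (div_nonneg (hf0 x) hl0.le)) hα0)
    have hFl : F ≤ l := by
      have h4 : ∫ x, f x ∂μ ≤ ∫ x, φ x ∂μ := integral_mono hfi hφint hfφ
      rw [hIf] at h4
      exact le_of_mul_le_mul_left (h4.trans hIφ) hV
    set c₂ := Real.log (Real.exp 1 + l / F) ^ α with hc2
    have hc2' : 0 ≤ c₂ := by
      rw [hc2]
      exact Real.rpow_nonneg (by linarith [one_le_elog (div_nonneg hl0.le hF.le)]) α
    have hc2F : F * c₂ ≤ M * l := by
      have ht := t_log_bound α hα0 (t := F / l) (div_pos hF hl0) ((div_le_one hl0).2 hFl)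
      have h1t : 1 / (F / l) = l / F := by
        field_simp
      rw [h1t, ← hMdef, ← hc2] at ht
      have h5 := mul_le_mul_of_nonneg_left ht hl0.le
      calc F * c₂ = l * (F / l * c₂) := by field_simp
      _ ≤ l * M := h5
      _ = M * l := mul_comm _ _
    have hgφ : ∀ x, g x ≤ 2^α * φ x + (2^α * c₂) * f x := by
      intro x
      simp only [hgdef, hφdef, hc2]
      exact hsplit l F hl0 hF x
    have h5 : ∫ x, g x ∂μ ≤ 2^α * (V * l) + (2^α * c₂) * (V * F) := by
      calc ∫ x, g x ∂μ ≤ ∫ x, (2^α * φ x + (2^α * c₂) * f x) ∂μ :=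
            integral_mono hgi ((hφint.const_mul _).add (hfi.const_mul _)) hgφ
      _ = 2^α * ∫ x, φ x ∂μ + (2^α * c₂) * ∫ x, f x ∂μ := by
            rw [integral_add (hφint.const_mul _) (hfi.const_mul _),
              integral_const_mul, integral_const_mul]
      _ ≤ 2^α * (V * l) + (2^α * c₂) * (V * F) := by
            rw [hIf]
            have h6 := mul_le_mul_of_nonneg_left hIφ h2α.le
            linarith
    have h6 : B ≤ V⁻¹ * (2^α * (V * l) + (2^α * c₂) * (V * F)) := by
      rw [hBdef]
      exact mul_le_mul_of_nonneg_left (hIg ▸ h5 : ∫ x, g x ∂μ ≤ _) (inv_nonneg.2 hV.le)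
    have h7 : V⁻¹ * (2^α * (V * l) + (2^α * c₂) * (V * F)) = 2^α * l + 2^α * (F * c₂) := by
      field_simp
    rw [h7] at h6
    have h8 : 2^α * (F * c₂) ≤ 2^α * (M * l) := mul_le_mul_of_nonneg_left hc2F h2α.le
    calc B ≤ 2^α * l + 2^α * (M * l) := by linarith
    _ = K * l := by rw [hKdef]; ring
  apply le_csInf ⟨B, hBS⟩
  intro l hl
  have h9 := mul_le_mul_of_nonneg_left (hlower l hl) (inv_nonneg.2 hKpos.le)
  calc K⁻¹ * B ≤ K⁻¹ * (K * l) := h9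
  _ = l := by rw [← mul_assoc, inv_mul_cancel₀ hKpos.ne', one_mul]

/-- Wilson's equivalence: `‖f‖_{L(log L)^α,Q} ≍ (1/|Q|)∫_Q f (log(e + f/f_Q))^α`. -/
theorem stmt19 (n : ℕ) (hn : 0 < n) (α : ℝ) (hα : 0 < α) :
    ∃ c > (0 : ℝ), ∃ C > (0 : ℝ), ∀ (a : Fin n → ℝ) (h : ℝ), 0 < h →
      ∀ f : (Fin n → ℝ) → ℝ, (∀ x, 0 ≤ f x) → Measurable f →
      MeasureTheory.IntegrableOn f (cube n a h) →
      0 < avgI n (cube n a h) f →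
      MeasureTheory.IntegrableOn
        (fun x => f x * (Real.log (Real.exp 1 + f x / avgI n (cube n a h) f)) ^ α)
        (cube n a h) →
      c * avgI n (cube n a h)
          (fun x => f x * (Real.log (Real.exp 1 + f x / avgI n (cube n a h) f)) ^ α) ≤
        orliczAvg n (fun t => t * (Real.log (Real.exp 1 + t)) ^ α) (cube n a h) f ∧
      orliczAvg n (fun t => t * (Real.log (Real.exp 1 + t)) ^ α) (cube n a h) f ≤
        C * avgI n (cube n a h)
          (fun x => f x * (Real.log (Real.exp 1 + f x / avgI n (cube n a h) f)) ^ α) := by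
  have h2α : (0:ℝ) < 2^α := Real.rpow_pos_of_pos (by norm_num) α
  have hKpos : (0:ℝ) < 2^α * (1 + 2^α * (2^α + (1 + (Nat.ceil α).factorial))) := by positivity
  refine ⟨(2^α * (1 + 2^α * (2^α + (1 + (Nat.ceil α).factorial))))⁻¹, by positivity,
    1, one_pos, ?_⟩
  intro a h hh f hf0 hfm hfi hF hgi
  -- volume of the cube
  have hQpi : cube n a h = Set.univ.pi fun i => Set.Icc (a i) (a i + h) := by
    ext x; simp [cube, Set.mem_pi, Set.mem_Icc, Pi.le_def, forall_and]
  have hVpos : 0 < (volume (cube n a h)).toReal := by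
    rw [hQpi, volume_pi_pi]
    simp only [Real.volume_Icc, add_sub_cancel_left]
    rw [Finset.prod_const, Finset.card_univ, Fintype.card_fin,
      ENNReal.toReal_pow, ENNReal.toReal_ofReal hh.le]
    positivity
  have key := wilson_aux (μ := volume.restrict (cube n a h))
    (V := (volume (cube n a h)).toReal)
    (F := avgI n (cube n a h) f)
    (B := avgI n (cube n a h)
      (fun x => f x * (Real.log (Real.exp 1 + f x / avgI n (cube n a h) f)) ^ α))
    hα hVpos hf0 hfm hfi rfl hF hgi rfl
  have horlicz : orliczAvg n (fun t => t * (Real.log (Real.exp 1 + t)) ^ α) (cube n a h) f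
      = sInf {l : ℝ | 0 < l ∧
        ((volume (cube n a h)).toReal)⁻¹ *
          ∫ x in cube n a h, (|f x| / l) * Real.log (Real.exp 1 + |f x| / l) ^ α ≤ 1} := rfl
  rw [horlicz, one_mul]
  exact key
end
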